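/- The only autoequivalences of the simplex category Δ are the identity and the order-reversing automorphism σ which fixes each object [n] and sends an order-preserving map f : [n] → [m] to the map i ↦ m − f(n − i); in particular the group of isomorphism classes of autoequivalences of Δ is Z/2. -/

import Mathlib

/-!
STATEMENT 5: The only autoequivalences of the simplex category `Δ` are the identity
and the order-reversing automorphism `σ`, which fixes each object `[n]` and sends
an order-preserving map `f : [n] ⟶ [m]` to the map `i ↦ m - f (n - i)`;
in particular the group of isomorphism classes of autoequivalences of `Δ` is `ℤ/2`.
-/

open CategoryTheory

namespace SimplexAuto

/-- The order-reversing automorphism `σ` of the simplex category: it fixes each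
object `[n]` and sends `f : [n] ⟶ [m]` to `i ↦ m - f (n - i)` (i.e. `i ↦ (f i.rev).rev`). -/
def sigma : SimplexCategory ⥤ SimplexCategory where
  obj n := n
  map {n m} f := SimplexCategory.Hom.mk
    ⟨fun i => (f.toOrderHom i.rev).rev, by
      intro i j hij
      exact Fin.rev_le_rev.mpr (f.toOrderHom.monotone (Fin.rev_le_rev.mpr hij))⟩
  map_id n := by
    apply SimplexCategory.Hom.ext
    ext i
    simp [Fin.rev_rev]
  map_comp f g := by
    apply SimplexCategory.Hom.ext
    ext i
    change ((g.toOrderHom (f.toOrderHom i.rev)).rev : ℕ) =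
      ((g.toOrderHom ((f.toOrderHom i.rev).rev.rev)).rev : ℕ)
    rw [Fin.rev_rev]

open SimplexCategory

/-- The point `i` of `n`, as a morphism `[0] ⟶ n`. -/
abbrev pt {n : SimplexCategory} (i : Fin (n.len + 1)) : SimplexCategory.mk 0 ⟶ n :=
  const _ n i

lemma pt_injective {n : SimplexCategory} : Function.Injective (pt (n := n)) := by
  intro i j h
  simpa using congrArg (fun f => Hom.toOrderHom f 0) h

lemma sigma_map_const {x y : SimplexCategory} (i : Fin (y.len + 1)) :
    sigma.map (const x y i) = const x y i.rev := rfl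

lemma sigma_sigma_map {n m : SimplexCategory} (f : n ⟶ m) :
    sigma.map (sigma.map f) = f := by
  apply SimplexCategory.Hom.ext
  ext i
  change (((f.toOrderHom i.rev.rev).rev.rev : Fin (m.len + 1)) : ℕ) = ((f.toOrderHom i : Fin (m.len + 1)) : ℕ)
  rw [Fin.rev_rev, Fin.rev_rev]

/-- A monotone bijection of `Fin (k+1)` is the identity. -/
lemma monotone_bijective_eq_id {k : ℕ} (f : Fin (k + 1) → Fin (k + 1))
    (hm : Monotone f) (hb : Function.Bijective f) : ∀ i, f i = i := by
  let e : Fin (k + 1) ≃o Fin (k + 1) :=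
    StrictMono.orderIsoOfSurjective f (hm.strictMono_of_injective hb.1) hb.2
  intro i
  have he : e = OrderIso.refl _ := Subsingleton.elim _ _
  have : e i = i := by rw [he]; rfl
  exact this

lemma hom_zero_one (g : SimplexCategory.mk 0 ⟶ SimplexCategory.mk 1) :
    g = pt 0 ∨ g = pt 1 := by
  obtain ⟨a, rfl⟩ := exists_eq_const_of_zero g
  fin_cases a
  · exact Or.inl rfl
  · exact Or.inr rfl

/-- Core combinatorial lemma: a composition-preserving family of maps on hom-sets of `Δ`
which is bijective on maps out of `[0]` and fixes the two points of `[1]`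
is the identity on all hom-sets. -/
lemma core (φ : ∀ {n m : SimplexCategory}, (n ⟶ m) → (n ⟶ m))
    (hcomp : ∀ {a b c : SimplexCategory} (f : a ⟶ b) (g : b ⟶ c), φ (f ≫ g) = φ f ≫ φ g)
    (hbij : ∀ n : SimplexCategory, Function.Bijective (φ (n := SimplexCategory.mk 0) (m := n)))
    (h0 : φ (pt 0 : SimplexCategory.mk 0 ⟶ SimplexCategory.mk 1) = pt 0)
    (h1 : φ (pt 1 : SimplexCategory.mk 0 ⟶ SimplexCategory.mk 1) = pt 1) :
    ∀ {n m : SimplexCategory} (f : n ⟶ m), φ f = f := by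
  have hpt : ∀ (n : SimplexCategory) (i : Fin (n.len + 1)), φ (pt i) = pt i := by
    intro n
    set ψ : Fin (n.len + 1) → Fin (n.len + 1) :=
      fun i => (φ (pt i)).toOrderHom 0 with hψ
    have hφpt : ∀ i, φ (pt i) = pt (ψ i) := fun i => eq_const_of_zero _
    have hψbij : Function.Bijective ψ := by
      constructor
      · intro i j hij
        apply pt_injective
        apply (hbij n).1
        rw [hφpt i, hφpt j, hij]
      · intro j
        obtain ⟨g, hg⟩ := (hbij n).2 (pt j)
        obtain ⟨a, rfl⟩ := exists_eq_const_of_zero g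
        exact ⟨a, pt_injective (by rw [← hφpt, hg])⟩
    have hψmono : Monotone ψ := by
      intro i j hij
      -- the morphism [1] ⟶ n sending 0 ↦ i, 1 ↦ j
      let g : SimplexCategory.mk 1 ⟶ n :=
        (mkOfLe i j hij : SimplexCategory.mk 1 ⟶ SimplexCategory.mk n.len)
      have hg0 : (pt 0 : SimplexCategory.mk 0 ⟶ SimplexCategory.mk 1) ≫ g
          = pt i := rfl
      have hg1 : (pt 1 : SimplexCategory.mk 0 ⟶ SimplexCategory.mk 1) ≫ g
          = pt j := rfl
      have e0 : φ (pt i) = pt ((φ g).toOrderHom 0) := by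
        rw [← hg0, hcomp, h0, const_comp]
      have e1 : φ (pt j) = pt ((φ g).toOrderHom 1) := by
        rw [← hg1, hcomp, h1, const_comp]
      have l0 : ψ i = (φ g).toOrderHom 0 := pt_injective (by rw [← hφpt, e0])
      have l1 : ψ j = (φ g).toOrderHom 1 := pt_injective (by rw [← hφpt, e1])
      rw [l0, l1]
      exact (φ g).toOrderHom.monotone (by decide)
    intro i
    rw [hφpt i, monotone_bijective_eq_id ψ hψmono hψbij i]
  intro n m f
  apply SimplexCategory.Hom.ext
  apply OrderHom.ext
  funext i
  have h1 : pt i ≫ φ f = pt (f.toOrderHom i) := by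
    rw [← hpt n i, ← hcomp, const_comp, hpt]
  rw [const_comp] at h1
  exact pt_injective h1

variable (E : SimplexCategory ≌ SimplexCategory)

/-- The points of an object, as an equivalence with morphisms from `[0]`. -/
def ptEquiv (m : SimplexCategory) : (SimplexCategory.mk 0 ⟶ m) ≃ Fin (m.len + 1) where
  toFun g := g.toOrderHom 0
  invFun i := pt i
  left_inv g := (eq_const_of_zero g).symm
  right_inv i := rfl

lemma obj_zero : E.functor.obj (SimplexCategory.mk 0) = SimplexCategory.mk 0 := by
  haveI : Subsingleton (SimplexCategory.mk 0 ⟶ SimplexCategory.mk 0) :=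
    ⟨fun f g => by rw [eq_const_to_zero f, eq_const_to_zero g]⟩
  haveI : Subsingleton (E.functor.obj (SimplexCategory.mk 0) ⟶
      E.functor.obj (SimplexCategory.mk 0)) :=
    (E.fullyFaithfulFunctor.homEquiv (X := SimplexCategory.mk 0)
      (Y := SimplexCategory.mk 0)).symm.subsingleton
  apply SimplexCategory.ext
  have h : 𝟙 (E.functor.obj (SimplexCategory.mk 0)) = const _ _ 0 := Subsingleton.elim _ _
  have := congrArg (fun f => Hom.toOrderHom f (Fin.last _)) h
  simp only [id_toOrderHom, OrderHom.id_coe, id_eq, const_apply] at this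
  simpa [Fin.ext_iff] using this

lemma obj_eq (n : SimplexCategory) : E.functor.obj n = n := by
  apply SimplexCategory.ext
  have e1 := (ptEquiv (E.functor.obj n)).symm
  have e3 : ((E.functor.obj (SimplexCategory.mk 0) ⟶ E.functor.obj n) : Type) =
      ((SimplexCategory.mk 0 ⟶ E.functor.obj n) : Type) := by rw [obj_zero E]
  have e2 := (E.fullyFaithfulFunctor.homEquiv (X := SimplexCategory.mk 0) (Y := n)).symm
  have chain : Fin ((E.functor.obj n).len + 1) ≃ Fin (n.len + 1) :=
    ((e1.trans (Equiv.cast e3).symm).trans e2).trans (ptEquiv n)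
  exact Nat.succ_injective (Fin.equiv_iff_eq.mp ⟨chain⟩)

/-- `E.functor` transported to a functor which is literally the identity on objects. -/
def G : SimplexCategory ⥤ SimplexCategory where
  obj n := n
  map {n m} f := eqToHom (obj_eq E n).symm ≫ E.functor.map f ≫ eqToHom (obj_eq E m)
  map_id n := by simp
  map_comp f g := by simp

/-- `E.functor` is isomorphic to its transport. -/
def isoG : E.functor ≅ G E :=
  NatIso.ofComponents (fun n => eqToIso (obj_eq E n)) (by
    intro n m f
    simp [G])

lemma G_bijective (n m : SimplexCategory) :
    Function.Bijective (fun f : n ⟶ m => (G E).map f) := by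
  constructor
  · intro f g h
    apply E.functor.map_injective
    have := congrArg (fun h => eqToHom (obj_eq E n) ≫ h ≫ eqToHom (obj_eq E m).symm) h
    simpa [G] using this
  · intro g
    obtain ⟨f, hf⟩ := E.functor.map_surjective
      (eqToHom (obj_eq E n) ≫ g ≫ eqToHom (obj_eq E m).symm)
    exact ⟨f, by simp [G, hf]; erw [Category.assoc, eqToHom_trans, eqToHom_refl, Category.comp_id]⟩

theorem autoequivalences_of_simplexCategory
    (E : SimplexCategory ≌ SimplexCategory) :
    (Nonempty (E.functor ≅ 𝟭 SimplexCategory) ∨ Nonempty (E.functor ≅ sigma)) ∧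
      ¬ Nonempty (sigma ≅ 𝟭 SimplexCategory) := by
  constructor
  · -- classify the value of `G E` on the two points of `[1]`
    rcases hom_zero_one ((G E).map (pt 0 :
        SimplexCategory.mk 0 ⟶ SimplexCategory.mk 1)) with ha | ha <;>
      rcases hom_zero_one ((G E).map (pt 1 :
        SimplexCategory.mk 0 ⟶ SimplexCategory.mk 1)) with hb | hb
    · -- impossible: both points sent to `pt 0`
      have h01 : (pt 0 : SimplexCategory.mk 0 ⟶ SimplexCategory.mk 1) = pt 1 :=
        (G_bijective E _ _).1 (ha.trans hb.symm)
      exact absurd (pt_injective h01) (by decide)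
    · -- identity case
      have hid : ∀ {n m : SimplexCategory} (f : n ⟶ m), (G E).map f = f :=
        core (fun f => (G E).map f) (fun f g => (G E).map_comp f g)
          (fun n => G_bijective E _ n) ha hb
      have hG : G E = 𝟭 SimplexCategory :=
        CategoryTheory.Functor.ext (fun X => rfl) (fun X Y f => by simp [hid f]; erw [eqToHom_refl, eqToHom_refl, Category.id_comp, Category.comp_id])
      exact Or.inl ⟨(isoG E).trans (eqToIso hG)⟩
    · -- sigma case
      have hid : ∀ {n m : SimplexCategory} (f : n ⟶ m), sigma.map ((G E).map f) = f := by
        apply core (fun f => sigma.map ((G E).map f))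
        · intro a b c f g
          rw [(G E).map_comp]; exact sigma.map_comp _ _
        · intro n
          exact (Function.Involutive.bijective (fun f => sigma_sigma_map f)).comp
            (G_bijective E _ n)
        · show sigma.map ((G E).map (pt 0 : SimplexCategory.mk 0 ⟶ SimplexCategory.mk 1)) = pt 0
          rw [ha]
          show sigma.map (pt 1 : SimplexCategory.mk 0 ⟶ SimplexCategory.mk 1) = pt 0
          apply SimplexCategory.Hom.ext
          apply OrderHom.ext
          funext t
          revert t
          decide
        · show sigma.map ((G E).map (pt 1 : SimplexCategory.mk 0 ⟶ SimplexCategory.mk 1)) = pt 1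
          rw [hb]
          show sigma.map (pt 0 : SimplexCategory.mk 0 ⟶ SimplexCategory.mk 1) = pt 1
          apply SimplexCategory.Hom.ext
          apply OrderHom.ext
          funext t
          revert t
          decide
      have hs : ∀ {n m : SimplexCategory} (f : n ⟶ m), (G E).map f = sigma.map f := by
        intro n m f
        conv_lhs => rw [← sigma_sigma_map ((G E).map f), hid f]
        rfl
      have hG : G E = sigma :=
        CategoryTheory.Functor.ext (fun X => rfl) (fun X Y f => by simp [hs f]; erw [eqToHom_refl, eqToHom_refl, Category.id_comp, Category.comp_id])
      exact Or.inr ⟨(isoG E).trans (eqToIso hG)⟩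
    · -- impossible: both points sent to `pt 1`
      have h01 : (pt 0 : SimplexCategory.mk 0 ⟶ SimplexCategory.mk 1) = pt 1 :=
        (G_bijective E _ _).1 (ha.trans hb.symm)
      exact absurd (pt_injective h01) (by decide)
  · rintro ⟨η⟩
    have h1 : η.hom.app (SimplexCategory.mk 1) = 𝟙 _ := by
      rw [← Iso.app_hom]; exact @eq_id_of_isIso _ _ (Iso.isIso_hom _)
    have h0 : η.hom.app (SimplexCategory.mk 0) = 𝟙 _ := by
      rw [← Iso.app_hom]; exact @eq_id_of_isIso _ _ (Iso.isIso_hom _)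
    have hnat := η.hom.naturality
      (pt 0 : SimplexCategory.mk 0 ⟶ SimplexCategory.mk 1)
    rw [h1, h0] at hnat; erw [Category.comp_id, Category.id_comp, Functor.id_map] at hnat
    have : sigma.map (pt 0 : SimplexCategory.mk 0 ⟶ SimplexCategory.mk 1)
        = pt (Fin.rev 0) := sigma_map_const _
    rw [this] at hnat
    exact absurd (pt_injective hnat) (by change Fin.rev (0 : Fin 2) ≠ 0; decide)

end SimplexAuto
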